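/- arXiv:2406.08769 — 11 statements merged into one kernel-verified Lean document; each statement's English description precedes it below -/
import Mathlib

section
/- Let a,b,c,d be complex numbers with ad - bc = 1. Then Re(a·conj(c)) · Re(b·conj(d)) ≥ -1/4. -/
open Complex

theorem stmt0 (a b c d : ℂ) (h : a * d - b * c = 1) :
    (a * (starRingEnd ℂ) c).re * (b * (starRingEnd ℂ) d).re ≥ -1/4 := by
  have key : 2 * ((a * (starRingEnd ℂ) c).re * (b * (starRingEnd ℂ) d).re)
      = ((a * b) * (starRingEnd ℂ) (c * d)).re + ((a * d) * (starRingEnd ℂ) (b * c)).re := by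
    simp only [mul_re, mul_im, map_mul, Complex.conj_re, Complex.conj_im]
    ring
  have had : a * d = 1 + b * c := by linear_combination h
  set v := b * c with hv
  have h2 : ((a * d) * (starRingEnd ℂ) v).re = v.re + ‖v‖ ^ 2 := by
    rw [had, Complex.sq_norm]
    simp only [Complex.normSq_apply, mul_re, add_re, add_im, one_re, one_im,
      Complex.conj_re, Complex.conj_im]
    ring
  have h3 : -(‖1 + v‖ * ‖v‖) ≤ ((a * b) * (starRingEnd ℂ) (c * d)).re := by
    have h4 := Complex.abs_re_le_norm ((a * b) * (starRingEnd ℂ) (c * d))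
    have habs : ‖(a * b) * (starRingEnd ℂ) (c * d)‖
        = ‖1 + v‖ * ‖v‖ := by
      rw [← had, hv]
      simp only [map_mul, norm_mul, Complex.norm_conj]
      ring
    rw [habs] at h4
    linarith [neg_abs_le ((a * b) * (starRingEnd ℂ) (c * d)).re]
  have hr : (0:ℝ) ≤ ‖v‖ := norm_nonneg v
  have hs : v.re ^ 2 ≤ ‖v‖ ^ 2 := by
    rw [Complex.sq_norm]
    simp only [Complex.normSq_apply]
    nlinarith [sq_nonneg v.im]
  have hR2 : ‖1 + v‖ ^ 2 = 1 + 2 * v.re + ‖v‖ ^ 2 := by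
    rw [Complex.sq_norm, Complex.sq_norm]
    simp only [Complex.normSq_apply, add_re, add_im, one_re, one_im]
    ring
  have hR : (0:ℝ) ≤ ‖1 + v‖ := norm_nonneg _
  nlinarith [sq_nonneg (v.re + 1/2), sq_nonneg (‖v‖ - ‖1 + v‖),
    mul_nonneg hR hr, sq_nonneg (v.re + ‖v‖ ^ 2 + 1/2 + ‖v‖ * ‖1+v‖)]
end

section
/- Let n be a positive integer and let a,b,c,d ∈ ℤ[√(-n)] (i.e. complex numbers of the form x + y√(-n) with x,y ∈ ℤ) satisfy ad - bc = 1. Then Re(a·conj(c)) · Re(b·conj(d)) ≥ 0. -/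
open Complex

/-- Key integer lemma: under the two relations coming from `ad - bc = 1`,
the product `A * B` is nonnegative. -/
lemma key_int (n A B w1 w2 m1 m2 : ℤ) (hn : 1 ≤ n)
    (h1 : A * B + n * (m1 * m2) = w1 ^ 2 + w1 + n * w2 ^ 2)
    (h2 : m1 * B - m2 * A = -w2) : 0 ≤ A * B := by
  by_contra hcon
  push_neg at hcon
  have hab : A * B ≤ -1 := by omega
  have hw1 : 0 ≤ w1 ^ 2 + w1 := by nlinarith [sq_nonneg (2 * w1 + 1)]
  have hm : 1 ≤ n * (m1 * m2 - w2 ^ 2) := by nlinarith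
  have hmm : w2 ^ 2 + 1 ≤ m1 * m2 := by
    by_contra h'
    push_neg at h'
    have h'' : m1 * m2 - w2 ^ 2 ≤ 0 := by omega
    nlinarith [mul_nonneg (by linarith : (0:ℤ) ≤ n) (by linarith : (0:ℤ) ≤ w2 ^ 2 - m1 * m2)]
  have hw2 : w2 ^ 2 = (m2 * A - m1 * B) ^ 2 := by
    have : w2 = m2 * A - m1 * B := by linarith
    rw [this]
  have h4 : 4 * (m1 * m2) ≤ w2 ^ 2 := by
    nlinarith [sq_nonneg (m2 * A + m1 * B),
      mul_nonneg (by nlinarith : (0:ℤ) ≤ m1 * m2) (by linarith : (0:ℤ) ≤ -A * B - 1)]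
  nlinarith [sq_nonneg w2]

theorem stmt2 (n : ℕ) (hn : 0 < n) (a b c d : ℂ)
    (ha : ∃ x y : ℤ, a = (x : ℂ) + (y : ℂ) * Real.sqrt n * Complex.I)
    (hb : ∃ x y : ℤ, b = (x : ℂ) + (y : ℂ) * Real.sqrt n * Complex.I)
    (hc : ∃ x y : ℤ, c = (x : ℂ) + (y : ℂ) * Real.sqrt n * Complex.I)
    (hd : ∃ x y : ℤ, d = (x : ℂ) + (y : ℂ) * Real.sqrt n * Complex.I)
    (h : a * d - b * c = 1) :
    (a * (starRingEnd ℂ) c).re * (b * (starRingEnd ℂ) d).re ≥ 0 := by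
  obtain ⟨a1, a2, rfl⟩ := ha
  obtain ⟨b1, b2, rfl⟩ := hb
  obtain ⟨c1, c2, rfl⟩ := hc
  obtain ⟨d1, d2, rfl⟩ := hd
  set s : ℝ := Real.sqrt n with hs_def
  have hs2 : s ^ 2 = (n : ℝ) := Real.sq_sqrt (by positivity)
  have hspos : 0 < s := Real.sqrt_pos.2 (by exact_mod_cast hn)
  -- extract real and imaginary parts of the determinant condition
  have hre := congrArg Complex.re h
  have him := congrArg Complex.im h
  simp only [Complex.sub_re, Complex.sub_im, Complex.mul_re, Complex.mul_im,
    Complex.add_re, Complex.add_im, Complex.mul_I_re, Complex.mul_I_im,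
    Complex.intCast_re, Complex.intCast_im, Complex.ofReal_re, Complex.ofReal_im,
    Complex.I_re, Complex.I_im, Complex.one_re, Complex.one_im,
    mul_zero, zero_mul, mul_one, sub_zero, add_zero, zero_add] at hre him
  -- integer forms of the determinant equations
  have hZ1 : a1 * d1 - (n : ℤ) * (a2 * d2) - (b1 * c1 - (n : ℤ) * (b2 * c2)) = 1 := by
    have E1 : ((a1 * d1 - (n : ℤ) * (a2 * d2) - (b1 * c1 - (n : ℤ) * (b2 * c2)) : ℤ) : ℝ) = 1 := by
      push_cast
      linear_combination hre + ((a2 : ℝ) * d2 - (b2 : ℝ) * c2) * hs2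
    exact_mod_cast E1
  have hZ2 : a1 * d2 + a2 * d1 - (b1 * c2 + b2 * c1) = 0 := by
    have E2 : ((a1 * d2 + a2 * d1 - (b1 * c2 + b2 * c1) : ℤ) : ℝ) * s = 0 := by
      push_cast
      linear_combination him
    have E3 : ((a1 * d2 + a2 * d1 - (b1 * c2 + b2 * c1) : ℤ) : ℝ) = 0 :=
      (mul_eq_zero.1 E2).resolve_right (ne_of_gt hspos)
    exact_mod_cast E3
  -- the two key integer relations
  have h1 : (a1 * c1 + (n : ℤ) * (a2 * c2)) * (b1 * d1 + (n : ℤ) * (b2 * d2))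
      + (n : ℤ) * ((a2 * c1 - a1 * c2) * (b2 * d1 - b1 * d2))
      = (b1 * c1 - (n : ℤ) * (b2 * c2)) ^ 2 + (b1 * c1 - (n : ℤ) * (b2 * c2))
        + (n : ℤ) * (b1 * c2 + b2 * c1) ^ 2 := by
    linear_combination (b1 * c1 - (n : ℤ) * (b2 * c2)) * hZ1
      + (n : ℤ) * (b1 * c2 + b2 * c1) * hZ2
  have h2 : (a2 * c1 - a1 * c2) * (b1 * d1 + (n : ℤ) * (b2 * d2))
      - (b2 * d1 - b1 * d2) * (a1 * c1 + (n : ℤ) * (a2 * c2))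
      = -(b1 * c2 + b2 * c1) := by
    linear_combination (b1 * c1 - (n : ℤ) * (b2 * c2)) * hZ2
      - (b1 * c2 + b2 * c1) * hZ1
  have hkey : 0 ≤ (a1 * c1 + (n : ℤ) * (a2 * c2)) * (b1 * d1 + (n : ℤ) * (b2 * d2)) :=
    key_int (n : ℤ) _ _ _ _ _ _ (by exact_mod_cast hn) h1 h2
  -- rewrite the goal
  have hA : (((a1 : ℂ) + (a2 : ℂ) * s * I) * (starRingEnd ℂ) ((c1 : ℂ) + (c2 : ℂ) * s * I)).re
      = ((a1 * c1 + (n : ℤ) * (a2 * c2) : ℤ) : ℝ) := by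
    simp only [map_add, map_mul, Complex.conj_I, map_intCast, Complex.conj_ofReal,
      Complex.mul_re, Complex.add_re, Complex.add_im, Complex.mul_im,
      Complex.intCast_re, Complex.intCast_im, Complex.ofReal_re, Complex.ofReal_im,
      Complex.I_re, Complex.I_im, Complex.neg_re, Complex.neg_im,
      mul_zero, zero_mul, mul_one, sub_zero, add_zero, zero_add, mul_neg, neg_zero, neg_neg]
    push_cast
    linear_combination ((a2 : ℝ) * c2) * hs2
  have hB : (((b1 : ℂ) + (b2 : ℂ) * s * I) * (starRingEnd ℂ) ((d1 : ℂ) + (d2 : ℂ) * s * I)).re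
      = ((b1 * d1 + (n : ℤ) * (b2 * d2) : ℤ) : ℝ) := by
    simp only [map_add, map_mul, Complex.conj_I, map_intCast, Complex.conj_ofReal,
      Complex.mul_re, Complex.add_re, Complex.add_im, Complex.mul_im,
      Complex.intCast_re, Complex.intCast_im, Complex.ofReal_re, Complex.ofReal_im,
      Complex.I_re, Complex.I_im, Complex.neg_re, Complex.neg_im,
      mul_zero, zero_mul, mul_one, sub_zero, add_zero, zero_add, mul_neg, neg_zero, neg_neg]
    push_cast
    linear_combination ((b2 : ℝ) * d2) * hs2
  rw [hA, hB]
  exact_mod_cast hkey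
end

section
/- Let n be a positive integer, and let a,b,c,d ∈ ℤ[√(-n)] with ad - bc = 1. Then Re(a·conj(c)) + Re(b·conj(d)) = 0 if and only if Re(a·conj(c)) = 0 and Re(b·conj(d)) = 0. -/
open Complex

private theorem key' (n k σ τ A B C D : ℤ) (hn : 1 ≤ n)
    (hA : 0 ≤ A) (hB : 0 ≤ B) (hC : 0 ≤ C) (hD : 0 ≤ D)
    (hAC : A * C = k ^ 2 + n * σ ^ 2) (hBD : B * D = k ^ 2 + n * τ ^ 2)
    (hsum : A * D + B * C = 1 - 2 * k ^ 2 + 2 * n * (σ * τ)) : k = 0 := by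
  by_contra hk
  have hk2 : 1 ≤ k ^ 2 := by
    rcases lt_or_gt_of_ne hk with h | h <;> nlinarith
  have hn0 : (0:ℤ) ≤ n := by omega
  have hprod : (A * D) * (B * C) = (k ^ 2 + n * σ ^ 2) * (k ^ 2 + n * τ ^ 2) := by
    linear_combination (B * D) * hAC + (k ^ 2 + n * σ ^ 2) * hBD
  rcases le_or_gt 0 (σ * τ) with hst | hst
  · have h1 : (0:ℤ) ≤ n * (σ * τ) := mul_nonneg hn0 hst
    have h2 : (0:ℤ) ≤ (k ^ 2 - 1) * (n * (σ * τ)) := mul_nonneg (by linarith) h1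
    have h3 : (0:ℤ) ≤ n * (k ^ 2 * (σ - τ) ^ 2) :=
      mul_nonneg hn0 (mul_nonneg (sq_nonneg k) (sq_nonneg _))
    nlinarith [sq_nonneg (A * D - B * C), hprod, h2, h3]
  · have hst1 : σ * τ ≤ -1 := by omega
    have h4 : n * (σ * τ) ≤ n * (-1) := mul_le_mul_of_nonneg_left hst1 hn0
    nlinarith [mul_nonneg hA hD, mul_nonneg hB hC]

theorem stmt3 (n : ℕ) (hn : 0 < n) (a b c d : ℂ)
    (ha : ∃ x y : ℤ, a = (x : ℂ) + (y : ℂ) * Real.sqrt n * Complex.I)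
    (hb : ∃ x y : ℤ, b = (x : ℂ) + (y : ℂ) * Real.sqrt n * Complex.I)
    (hc : ∃ x y : ℤ, c = (x : ℂ) + (y : ℂ) * Real.sqrt n * Complex.I)
    (hd : ∃ x y : ℤ, d = (x : ℂ) + (y : ℂ) * Real.sqrt n * Complex.I)
    (h : a * d - b * c = 1) :
    (a * (starRingEnd ℂ) c).re + (b * (starRingEnd ℂ) d).re = 0 ↔
      (a * (starRingEnd ℂ) c).re = 0 ∧ (b * (starRingEnd ℂ) d).re = 0 := by
  obtain ⟨xa, ya, rfl⟩ := ha
  obtain ⟨xb, yb, rfl⟩ := hb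
  obtain ⟨xc, yc, rfl⟩ := hc
  obtain ⟨xd, yd, rfl⟩ := hd
  set r : ℝ := Real.sqrt n with hrdef
  have hr : r * r = (n : ℝ) := Real.mul_self_sqrt (Nat.cast_nonneg n)
  have hrpos : 0 < r := Real.sqrt_pos.2 (by exact_mod_cast hn)
  have hre1 : (((xa:ℂ) + (ya:ℂ) * (r:ℂ) * I) * (starRingEnd ℂ) ((xc:ℂ) + (yc:ℂ) * (r:ℂ) * I)).re
      = ((xa * xc + (n:ℤ) * (ya * yc) : ℤ) : ℝ) := by
    simp [Complex.mul_re]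
    linear_combination ((ya:ℝ) * yc) * hr
  have hre2 : (((xb:ℂ) + (yb:ℂ) * (r:ℂ) * I) * (starRingEnd ℂ) ((xd:ℂ) + (yd:ℂ) * (r:ℂ) * I)).re
      = ((xb * xd + (n:ℤ) * (yb * yd) : ℤ) : ℝ) := by
    simp [Complex.mul_re]
    linear_combination ((yb:ℝ) * yd) * hr
  rw [Complex.ext_iff] at h
  obtain ⟨hR, hI⟩ := h
  simp [Complex.mul_re, Complex.mul_im] at hR hI
  have hE1 : (xa * xd - (n:ℤ) * (ya * yd) - xb * xc + (n:ℤ) * (yb * yc) : ℤ) = 1 := by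
    have : ((xa * xd - (n:ℤ) * (ya * yd) - xb * xc + (n:ℤ) * (yb * yc) : ℤ) : ℝ) = 1 := by
      push_cast
      linear_combination hR + ((ya:ℝ) * yd - yb * yc) * hr
    exact_mod_cast this
  have hE2 : (xa * yd + ya * xd - xb * yc - yb * xc : ℤ) = 0 := by
    have hI' : r * ((xa * yd + ya * xd - xb * yc - yb * xc : ℤ) : ℝ) = 0 := by
      push_cast
      linear_combination hI
    have := mul_eq_zero.1 hI'
    rcases this with h' | h'
    · exact absurd h' (ne_of_gt hrpos)
    · exact_mod_cast h'
  constructor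
  · intro hs
    rw [hre1, hre2] at hs ⊢
    have hK : (xa * xc + (n:ℤ) * (ya * yc)) + (xb * xd + (n:ℤ) * (yb * yd)) = 0 := by
      exact_mod_cast hs
    have hk0 : (xa * xc + (n:ℤ) * (ya * yc)) = 0 := by
      apply key' (n:ℤ) _ (ya * xc - xa * yc) (yb * xd - xb * yd)
        (xa ^ 2 + n * ya ^ 2) (xb ^ 2 + n * yb ^ 2) (xc ^ 2 + n * yc ^ 2) (xd ^ 2 + n * yd ^ 2)
        (by exact_mod_cast hn) (by positivity) (by positivity) (by positivity) (by positivity)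
      · ring
      · linear_combination (xb * xd + (n:ℤ) * (yb * yd) - (xa * xc + (n:ℤ) * (ya * yc))) * hK
      · linear_combination (xa * xd - (n:ℤ) * (ya * yd) - xb * xc + (n:ℤ) * (yb * yc) + 1) * hE1
          + (n:ℤ) * (xa * yd + ya * xd - xb * yc - yb * xc) * hE2
          + 2 * (xa * xc + (n:ℤ) * (ya * yc)) * hK
    constructor
    · exact_mod_cast congrArg (Int.cast : ℤ → ℝ) hk0
    · have : (xb * xd + (n:ℤ) * (yb * yd)) = 0 := by omega
      exact_mod_cast congrArg (Int.cast : ℤ → ℝ) this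
  · rintro ⟨h1, h2⟩
    rw [h1, h2, add_zero]
end

section
/- Let a,b,c,d be complex numbers with ad - bc = 1 and Re(a·conj(c)) = 1/2 = -Re(b·conj(d)). Then c = conj(d) and a = -conj(b). -/
open Complex

theorem stmt4 (a b c d : ℂ) (h : a * d - b * c = 1)
    (h1 : (a * (starRingEnd ℂ) c).re = 1/2)
    (h2 : (b * (starRingEnd ℂ) d).re = -(1/2)) :
    c = (starRingEnd ℂ) d ∧ a = -(starRingEnd ℂ) b := by
  set K := starRingEnd ℂ with hK
  -- 2 Re z = z + conj z
  have h1' : a * K c + K a * c = 1 := by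
    have := Complex.add_conj (a * K c)
    rw [h1] at this
    have hc : K (a * K c) = K a * c := by
      simp [map_mul, Complex.conj_conj]
    rw [hc] at this
    rw [this]; norm_num
  have h2' : b * K d + K b * d = -1 := by
    have := Complex.add_conj (b * K d)
    rw [h2] at this
    have hc : K (b * K d) = K b * d := by
      simp [map_mul, Complex.conj_conj]
    rw [hc] at this
    rw [this]; push_cast; ring
  have hconj : K a * K d - K b * K c = 1 := by
    have := congrArg K h
    simpa [map_sub, map_mul] using this
  have hd : d ≠ 0 := by
    intro hd0
    rw [hd0] at h2'
    simp at h2'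
  -- e1 : d*u = b*v
  have e1 : d * (a + K b) = b * (c - K d) := by linear_combination h + h2'
  -- e2 : K a * v = -(K c * u)
  have e2 : K a * (c - K d) = -(K c * (a + K b)) := by
    linear_combination h1' - hconj
  have key : (c - K d) * (K a * d + b * K c) = 0 := by
    linear_combination d * e2 - K c * e1
  rcases mul_eq_zero.mp key with hv | hcase
  · have hcd : c = K d := sub_eq_zero.mp hv
    have := e2
    rw [hv] at this
    simp at this
    rcases this with hc0 | hu
    · exfalso
      apply hd
      have : K c = K (K d) := congrArg K hcd
      rw [hc0] at this
      simpa using this.symm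
    · exact ⟨hcd, by linear_combination hu⟩
  · -- K a + b = 0
    have hu : K a + b = 0 := by
      linear_combination (-(K a)) * h + a * hcase + (-b) * h1'
    have ha : a = -K b := by
      have := congrArg K hu
      simp [map_add, Complex.conj_conj] at this
      linear_combination this
    have hb : b ≠ 0 := by
      intro hb0
      rw [hb0] at hu ha
      simp at hu ha
      rw [ha, hb0] at h
      simp at h
    have hv : c - K d = 0 := by
      have := e1
      rw [ha] at this
      simp at this
      rcases this with h' | h'
      · exact absurd h' hb
      · exact h'
    exact ⟨sub_eq_zero.mp hv, ha⟩
end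

section
/- Let n ≥ 1 be an integer and let a,b,c,d ∈ ℤ[√(-n)] with ad - bc = 1 and Re(a·conj(c)) = Re(b·conj(d)) = 0. Then either (a and d are purely imaginary and b and c are real) or (a and d are real and b and c are purely imaginary). -/
set_option maxHeartbeats 1000000

lemma keyInt (n : ℤ) (hn : 1 ≤ n) (x1 y1 x2 y2 x3 y3 x4 y4 : ℤ)
    (e1 : x1*x3 + n*(y1*y3) = 0) (e2 : x2*x4 + n*(y2*y4) = 0)
    (e3 : x1*x4 - n*(y1*y4) - (x2*x3 - n*(y2*y3)) = 1)
    (e4 : x1*y4 + y1*x4 - (x2*y3 + y2*x3) = 0) :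
    (x1 = 0 ∧ x4 = 0 ∧ y2 = 0 ∧ y3 = 0) ∨ (y1 = 0 ∧ y4 = 0 ∧ x2 = 0 ∧ x3 = 0) := by
  have F1 : x1*x2 - n*(y1*y2) = 0 := by
    linear_combination (x1^2+n*y1^2)*e2 - (x2^2+n*y2^2)*e1 - n*(x1*y2+x2*y1)*e4
      - (x1*x2 - n*(y1*y2))*e3
  have F3 : x1*y4 + y1*x4 = 0 := by
    linear_combination (y2*x4-x2*y4)*e1 + (x1*y3-y1*x3)*e2 + (x1*x4-n*(y1*y4))*e4
      - (x1*y4+y1*x4)*e3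
  have F4 : x2*y3 + y2*x3 = 0 := by linear_combination F3 - e4
  by_cases hA0 : x1 = 0 ∧ y1 = 0
  · obtain ⟨hx1, hy1⟩ := hA0
    subst hx1; subst hy1
    have hnorm : (x2^2 + n*y2^2) * (x3^2 + n*y3^2) = 1 := by
      linear_combination (1 - (x2*x3 - n*(y2*y3)))*e3 - n*(x2*y3+y2*x3)*e4
    have hb1 : x2^2 + n*y2^2 = 1 := by
      have hpos : 0 ≤ x2^2 + n*y2^2 := by positivity
      exact Int.eq_one_of_mul_eq_one_right hpos hnorm
    by_cases hy2 : y2 = 0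
    · subst hy2
      have hx2 : x2 ≠ 0 := by
        intro h; rw [h] at hb1; simp at hb1
      have hy3 : y3 = 0 := by
        have h' : x2 * y3 = 0 := by linear_combination F4
        exact (mul_eq_zero.mp h').resolve_left hx2
      have hx4 : x4 = 0 := by
        have h' : x2 * x4 = 0 := by linear_combination e2
        exact (mul_eq_zero.mp h').resolve_left hx2
      exact Or.inl ⟨rfl, hx4, rfl, hy3⟩
    · have hy2sq : 1 ≤ y2^2 := by
        rcases lt_or_gt_of_ne hy2 with h | h <;> nlinarith
      have hx2 : x2 = 0 := by
        have hx2sq : x2^2 = 0 := by nlinarith [sq_nonneg x2]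
        exact pow_eq_zero_iff (by norm_num) |>.mp hx2sq
      subst hx2
      have hx3 : x3 = 0 := by
        have h' : y2 * x3 = 0 := by linear_combination F4
        exact (mul_eq_zero.mp h').resolve_left hy2
      have hy4 : y4 = 0 := by
        have h' : n * (y2 * y4) = 0 := by linear_combination e2
        have h'' := (mul_eq_zero.mp h').resolve_left (by linarith)
        exact (mul_eq_zero.mp h'').resolve_left hy2
      exact Or.inr ⟨rfl, hy4, rfl, hx3⟩
  · have hApos : 0 < x1^2 + n*y1^2 := by
      rcases (not_and_or.mp hA0) with hx | hy
      · have h' : 0 < x1^2 := by positivity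
        nlinarith [sq_nonneg y1]
      · have h' : 0 < y1^2 := by positivity
        nlinarith [sq_nonneg x1]
    have hAne : (x1^2 + n*y1^2) ≠ 0 := ne_of_gt hApos
    have G1 : (x1^2 + n*y1^2) * x4 = (x1*x4 - n*(y1*y4)) * x1 := by
      linear_combination n*y1*F3
    have G2 : (x1^2 + n*y1^2) * y4 = -((x1*x4 - n*(y1*y4)) * y1) := by
      linear_combination x1*F3
    have G3 : (x1^2 + n*y1^2) * x2 = n*((x1*y2+x2*y1) * y1) := by
      linear_combination x1*F1
    have G4 : (x1^2 + n*y1^2) * y2 = (x1*y2+x2*y1) * x1 := by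
      linear_combination (-y1)*F1
    have G5 : (x1^2 + n*y1^2) * x3 = -(n*((x1*y3-y1*x3) * y1)) := by
      linear_combination x1*e1
    have G6 : (x1^2 + n*y1^2) * y3 = (x1*y3-y1*x3) * x1 := by
      linear_combination y1*e1
    have GS : (x1^2 + n*y1^2) * (x2*x3 - n*(y2*y3)) = -(n*((x1*y2+x2*y1)*(x1*y3-y1*x3))) := by
      linear_combination (x1*x2 - n*(y1*y2))*e1
    have main : x1 = 0 ∨ y1 = 0 := by
      by_contra hcon
      push_neg at hcon
      obtain ⟨hx1, hy1⟩ := hcon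
      set g : ℕ := Int.gcd x1 y1 with hgdef
      have hg0 : g ≠ 0 := fun h => hx1 (Int.gcd_eq_zero_iff.mp h).1
      have hgne : (g:ℤ) ≠ 0 := by exact_mod_cast hg0
      obtain ⟨u, hu⟩ : (g:ℤ) ∣ x1 := Int.gcd_dvd_left x1 y1
      obtain ⟨v, hv⟩ : (g:ℤ) ∣ y1 := Int.gcd_dvd_right x1 y1
      have huv : IsCoprime u v := by
        rw [Int.isCoprime_iff_gcd_eq_one]
        have h' : (g:ℤ).natAbs * Int.gcd u v = g := by
          rw [← Int.gcd_mul_left, ← hu, ← hv]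
        have hna : (g:ℤ).natAbs = g := Int.natAbs_natCast g
        rw [hna] at h'
        exact (Nat.mul_eq_left hg0).mp h'
      have hu0 : u ≠ 0 := fun h => hx1 (by rw [hu, h, mul_zero])
      have hv0 : v ≠ 0 := fun h => hy1 (by rw [hv, h, mul_zero])
      set e : ℕ := Int.gcd u (n*v) with hedef
      have he0 : e ≠ 0 := fun h => hu0 (Int.gcd_eq_zero_iff.mp h).1
      have hene : (e:ℤ) ≠ 0 := by exact_mod_cast he0
      have hepos : (0:ℤ) < e := lt_of_le_of_ne (by positivity) (Ne.symm hene)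
      have heu : (e:ℤ) ∣ u := Int.gcd_dvd_left u (n*v)
      have henv : (e:ℤ) ∣ n*v := Int.gcd_dvd_right u (n*v)
      have hev : IsCoprime (e:ℤ) v := IsCoprime.of_isCoprime_of_dvd_left huv heu
      have hen : (e:ℤ) ∣ n := hev.dvd_of_dvd_mul_right henv
      obtain ⟨u₁, hu₁⟩ := heu
      obtain ⟨n₁, hn₁⟩ := hen
      have hu₁0 : u₁ ≠ 0 := fun h => hu0 (by rw [hu₁, h, mul_zero])
      have hn₁pos : 1 ≤ n₁ := by
        by_contra h'
        push_neg at h'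
        have h'' : n₁ ≤ 0 := by linarith
        have : (e:ℤ)*n₁ ≤ 0 := mul_nonpos_of_nonneg_of_nonpos (le_of_lt hepos) h''
        rw [← hn₁] at this; linarith
      have hv2 : 1 ≤ v^2 := by
        have h' : 0 < v^2 := pow_two_pos_of_ne_zero hv0
        linarith [Int.lt_iff_add_one_le.mp h']
      have hu₁2 : 1 ≤ u₁^2 := by
        have h' : 0 < u₁^2 := pow_two_pos_of_ne_zero hu₁0
        linarith [Int.lt_iff_add_one_le.mp h']
      set A₁ : ℤ := (e:ℤ)*u₁^2 + n₁*v^2 with hA₁def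
      have hA₁2 : 2 ≤ A₁ := by
        have h1' : (0:ℤ) < (e:ℤ)*u₁^2 := mul_pos hepos (by positivity)
        have h2' : (0:ℤ) < n₁*v^2 := mul_pos (by linarith) (by positivity)
        have h1'' := Int.lt_iff_add_one_le.mp h1'
        have h2'' := Int.lt_iff_add_one_le.mp h2'
        rw [hA₁def]; linarith
      have hAfac : x1^2 + n*y1^2 = (g:ℤ)^2*(e:ℤ)*A₁ := by
        rw [hA₁def, hu, hv, hu₁, hn₁]; ring
      -- divisibility of p
      have hbez : ((e:ℕ):ℤ) = u * Int.gcdA u (n*v) + (n*v) * Int.gcdB u (n*v) :=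
        Int.gcd_eq_gcd_ab u (n*v)
      have dP1 : (x1^2 + n*y1^2) ∣ (x1*y2+x2*y1) * x1 := ⟨y2, G4.symm⟩
      have dP2 : (x1^2 + n*y1^2) ∣ (x1*y2+x2*y1) * (n*y1) := ⟨x2, by linear_combination -G3⟩
      have dP : (x1^2 + n*y1^2) ∣ (x1*y2+x2*y1) * ((g:ℤ)*e) := by
        have heq : (x1*y2+x2*y1) * ((g:ℤ)*e)
            = ((x1*y2+x2*y1)*x1) * Int.gcdA u (n*v) + ((x1*y2+x2*y1)*(n*y1)) * Int.gcdB u (n*v) := by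
          linear_combination ((x1*y2+x2*y1)*(g:ℤ))*hbez
            - ((x1*y2+x2*y1)*Int.gcdA u (n*v))*hu - ((x1*y2+x2*y1)*n*Int.gcdB u (n*v))*hv
        rw [heq]
        exact dvd_add (dP1.mul_right _) (dP2.mul_right _)
      obtain ⟨p₂, hp₂⟩ := dP
      have hp : x1*y2+x2*y1 = (g:ℤ)*A₁*p₂ := by
        apply mul_right_cancel₀ (mul_ne_zero hgne hene)
        calc (x1*y2+x2*y1) * ((g:ℤ)*e) = (x1^2+n*y1^2) * p₂ := hp₂
          _ = ((g:ℤ)*A₁*p₂) * ((g:ℤ)*e) := by rw [hAfac]; ring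
      -- divisibility of k
      have dK1 : (x1^2 + n*y1^2) ∣ (x1*y3-y1*x3) * x1 := ⟨y3, G6.symm⟩
      have dK2 : (x1^2 + n*y1^2) ∣ (x1*y3-y1*x3) * (n*y1) := ⟨-x3, by linear_combination G5⟩
      have dK : (x1^2 + n*y1^2) ∣ (x1*y3-y1*x3) * ((g:ℤ)*e) := by
        have heq : (x1*y3-y1*x3) * ((g:ℤ)*e)
            = ((x1*y3-y1*x3)*x1) * Int.gcdA u (n*v) + ((x1*y3-y1*x3)*(n*y1)) * Int.gcdB u (n*v) := by
          linear_combination ((x1*y3-y1*x3)*(g:ℤ))*hbez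
            - ((x1*y3-y1*x3)*Int.gcdA u (n*v))*hu - ((x1*y3-y1*x3)*n*Int.gcdB u (n*v))*hv
        rw [heq]
        exact dvd_add (dK1.mul_right _) (dK2.mul_right _)
      obtain ⟨k₂, hk₂⟩ := dK
      have hk : x1*y3-y1*x3 = (g:ℤ)*A₁*k₂ := by
        apply mul_right_cancel₀ (mul_ne_zero hgne hene)
        calc (x1*y3-y1*x3) * ((g:ℤ)*e) = (x1^2+n*y1^2) * k₂ := hk₂
          _ = ((g:ℤ)*A₁*k₂) * ((g:ℤ)*e) := by rw [hAfac]; ring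
      -- divisibility of R
      obtain ⟨α, β, hαβ⟩ := huv
      have dR1 : (x1^2 + n*y1^2) ∣ (x1*x4 - n*(y1*y4)) * x1 := ⟨x4, G1.symm⟩
      have dR2 : (x1^2 + n*y1^2) ∣ (x1*x4 - n*(y1*y4)) * y1 := ⟨-y4, by linear_combination G2⟩
      have dR : (x1^2 + n*y1^2) ∣ (x1*x4 - n*(y1*y4)) * (g:ℤ) := by
        have heq : (x1*x4 - n*(y1*y4)) * (g:ℤ)
            = ((x1*x4 - n*(y1*y4))*x1) * α + ((x1*x4 - n*(y1*y4))*y1) * β := by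
          linear_combination (-((x1*x4 - n*(y1*y4))*(g:ℤ)))*hαβ
            - ((x1*x4 - n*(y1*y4))*α)*hu - ((x1*x4 - n*(y1*y4))*β)*hv
        rw [heq]
        exact dvd_add (dR1.mul_right _) (dR2.mul_right _)
      obtain ⟨r₂, hr₂⟩ := dR
      have hr : x1*x4 - n*(y1*y4) = (g:ℤ)*(e:ℤ)*A₁*r₂ := by
        apply mul_right_cancel₀ hgne
        calc (x1*x4 - n*(y1*y4)) * (g:ℤ) = (x1^2+n*y1^2) * r₂ := hr₂
          _ = ((g:ℤ)*(e:ℤ)*A₁*r₂) * (g:ℤ) := by rw [hAfac]; ring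
      -- the contradiction
      have hEq : (x1^2+n*y1^2) * ((x1*x4 - n*(y1*y4)) - 1)
          = -(n*((x1*y2+x2*y1)*(x1*y3-y1*x3))) := by
        linear_combination GS + (x1^2+n*y1^2)*e3
      rw [hAfac, hr, hp, hk, hn₁] at hEq
      have hWne : ((g:ℤ)^2*(e:ℤ)*A₁) ≠ 0 :=
        mul_ne_zero (mul_ne_zero (pow_ne_zero 2 hgne) hene) (by linarith)
      have hz : (g:ℤ)*(e:ℤ)*A₁*r₂ - 1 + n₁*A₁*(p₂*k₂) = 0 := by
        apply mul_left_cancel₀ hWne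
        rw [mul_zero]
        linear_combination hEq
      have hdvd : A₁ ∣ 1 := ⟨(g:ℤ)*(e:ℤ)*r₂ + n₁*(p₂*k₂), by linear_combination -hz⟩
      have := Int.le_of_dvd one_pos hdvd
      linarith
    rcases main with hx1 | hy1
    · have hx4 : x4 = 0 := by
        have h' : (x1^2+n*y1^2) * x4 = 0 := by rw [G1, hx1]; ring
        exact (mul_eq_zero.mp h').resolve_left hAne
      have hy2 : y2 = 0 := by
        have h' : (x1^2+n*y1^2) * y2 = 0 := by rw [G4, hx1]; ring
        exact (mul_eq_zero.mp h').resolve_left hAne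
      have hy3 : y3 = 0 := by
        have h' : (x1^2+n*y1^2) * y3 = 0 := by rw [G6, hx1]; ring
        exact (mul_eq_zero.mp h').resolve_left hAne
      exact Or.inl ⟨hx1, hx4, hy2, hy3⟩
    · have hy4 : y4 = 0 := by
        have h' : (x1^2+n*y1^2) * y4 = 0 := by rw [G2, hy1]; ring
        exact (mul_eq_zero.mp h').resolve_left hAne
      have hx2 : x2 = 0 := by
        have h' : (x1^2+n*y1^2) * x2 = 0 := by rw [G3, hy1]; ring
        exact (mul_eq_zero.mp h').resolve_left hAne
      have hx3 : x3 = 0 := by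
        have h' : (x1^2+n*y1^2) * x3 = 0 := by rw [G5, hy1]; ring
        exact (mul_eq_zero.mp h').resolve_left hAne
      exact Or.inr ⟨hy1, hy4, hx2, hx3⟩

open Complex

theorem stmt6 (n : ℕ) (hn : 1 ≤ n) (a b c d : ℂ)
    (ha : ∃ x y : ℤ, a = (x : ℂ) + (y : ℂ) * Real.sqrt n * Complex.I)
    (hb : ∃ x y : ℤ, b = (x : ℂ) + (y : ℂ) * Real.sqrt n * Complex.I)
    (hc : ∃ x y : ℤ, c = (x : ℂ) + (y : ℂ) * Real.sqrt n * Complex.I)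
    (hd : ∃ x y : ℤ, d = (x : ℂ) + (y : ℂ) * Real.sqrt n * Complex.I)
    (h : a * d - b * c = 1)
    (h1 : (a * (starRingEnd ℂ) c).re = 0)
    (h2 : (b * (starRingEnd ℂ) d).re = 0) :
    (a.re = 0 ∧ d.re = 0 ∧ b.im = 0 ∧ c.im = 0) ∨
      (a.im = 0 ∧ d.im = 0 ∧ b.re = 0 ∧ c.re = 0) := by
  obtain ⟨x1, y1, ha⟩ := ha
  obtain ⟨x2, y2, hb⟩ := hb
  obtain ⟨x3, y3, hc⟩ := hc
  obtain ⟨x4, y4, hd⟩ := hd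
  subst ha hb hc hd
  set s : ℝ := Real.sqrt n with hsdef
  have hnpos : (0:ℝ) < n := by exact_mod_cast hn
  have hs : 0 < s := Real.sqrt_pos.mpr hnpos
  have hs2 : s^2 = (n:ℝ) := Real.sq_sqrt (le_of_lt hnpos)
  have hre : ∀ (x y : ℤ), ((x : ℂ) + (y : ℂ) * (s:ℂ) * Complex.I).re = (x:ℝ) := by
    intro x y; simp
  have him : ∀ (x y : ℤ), ((x : ℂ) + (y : ℂ) * (s:ℂ) * Complex.I).im = (y:ℝ)*s := by
    intro x y; simp
  -- extract real equations
  rw [Complex.mul_re, Complex.conj_re, Complex.conj_im, hre, hre, him, him] at h1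
  rw [Complex.mul_re, Complex.conj_re, Complex.conj_im, hre, hre, him, him] at h2
  have hRe := congrArg Complex.re h
  have hIm := congrArg Complex.im h
  simp only [Complex.sub_re, Complex.sub_im, Complex.mul_re, Complex.mul_im,
    Complex.one_re, Complex.one_im, hre, him] at hRe hIm
  -- integer equations
  have e1 : x1*x3 + (n:ℤ)*(y1*y3) = 0 := by
    have : (x1:ℝ)*x3 + (n:ℝ)*(y1*y3) = 0 := by
      linear_combination h1 - (y1*y3 : ℝ)*hs2
    exact_mod_cast this
  have e2 : x2*x4 + (n:ℤ)*(y2*y4) = 0 := by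
    have : (x2:ℝ)*x4 + (n:ℝ)*(y2*y4) = 0 := by
      linear_combination h2 - (y2*y4 : ℝ)*hs2
    exact_mod_cast this
  have e3 : x1*x4 - (n:ℤ)*(y1*y4) - (x2*x3 - (n:ℤ)*(y2*y3)) = 1 := by
    have : (x1:ℝ)*x4 - (n:ℝ)*(y1*y4) - ((x2:ℝ)*x3 - (n:ℝ)*(y2*y3)) = 1 := by
      linear_combination hRe + ((y1*y4 : ℝ) - (y2*y3:ℝ))*hs2
    exact_mod_cast this
  have e4 : x1*y4 + y1*x4 - (x2*y3 + y2*x3) = 0 := by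
    have hR : (x1*y4 + y1*x4 - (x2*y3 + y2*x3) : ℝ) = 0 := by
      apply mul_left_cancel₀ (ne_of_gt hs)
      linear_combination hIm
    exact_mod_cast hR
  have hnZ : (1:ℤ) ≤ (n:ℤ) := by exact_mod_cast hn
  rcases keyInt (n:ℤ) hnZ x1 y1 x2 y2 x3 y3 x4 y4 e1 e2 e3 e4 with
    ⟨h1', h4', h2', h3'⟩ | ⟨h1', h4', h2', h3'⟩
  · left
    refine ⟨?_, ?_, ?_, ?_⟩
    · rw [hre]; exact_mod_cast congrArg (Int.cast : ℤ → ℝ) h1'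
    · rw [hre]; exact_mod_cast congrArg (Int.cast : ℤ → ℝ) h4'
    · rw [him, show ((y2:ℝ)) = 0 from by exact_mod_cast congrArg (Int.cast : ℤ → ℝ) h2']; ring
    · rw [him, show ((y3:ℝ)) = 0 from by exact_mod_cast congrArg (Int.cast : ℤ → ℝ) h3']; ring
  · right
    refine ⟨?_, ?_, ?_, ?_⟩
    · rw [him, show ((y1:ℝ)) = 0 from by exact_mod_cast congrArg (Int.cast : ℤ → ℝ) h1']; ring
    · rw [him, show ((y4:ℝ)) = 0 from by exact_mod_cast congrArg (Int.cast : ℤ → ℝ) h4']; ring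
    · rw [hre]; exact_mod_cast congrArg (Int.cast : ℤ → ℝ) h2'
    · rw [hre]; exact_mod_cast congrArg (Int.cast : ℤ → ℝ) h3'
end

section
/- Let a,b,c,d be complex numbers with ad - bc = 1. Then (Im(b·conj(c) - a·conj(d)))² - 4·Re(a·conj(c))·Re(b·conj(d)) ≤ 1. -/
open Complex

theorem stmt10 (a b c d : ℂ) (h : a * d - b * c = 1) :
    (b * (starRingEnd ℂ) c - a * (starRingEnd ℂ) d).im ^ 2 -
      4 * (a * (starRingEnd ℂ) c).re * (b * (starRingEnd ℂ) d).re ≤ 1 := by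
  have h1 := congrArg Complex.re h
  have h2 := congrArg Complex.im h
  simp [Complex.mul_re, Complex.mul_im] at h1 h2 ⊢
  nlinarith [sq_nonneg (a.re*d.re + a.im*d.im + b.re*c.re + b.im*c.im), sq_nonneg (a.re*d.im - a.im*d.re + b.re*c.im - b.im*c.re), h1, h2]
end

section
/- Let n be a positive integer and a,b,c,d ∈ ℤ[√(-n)] with ad - bc = 1. Then (Im(b·conj(c) - a·conj(d)))² - 4·Re(a·conj(c))·Re(b·conj(d)) ≤ 0. -/
open Complex
theorem stmt11 (n : ℕ) (hn : 0 < n) (a b c d : ℂ)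
    (ha : ∃ x y : ℤ, a = (x : ℂ) + (y : ℂ) * Real.sqrt n * Complex.I)
    (hb : ∃ x y : ℤ, b = (x : ℂ) + (y : ℂ) * Real.sqrt n * Complex.I)
    (hc : ∃ x y : ℤ, c = (x : ℂ) + (y : ℂ) * Real.sqrt n * Complex.I)
    (hd : ∃ x y : ℤ, d = (x : ℂ) + (y : ℂ) * Real.sqrt n * Complex.I)
    (h : a * d - b * c = 1) :
    (b * (starRingEnd ℂ) c - a * (starRingEnd ℂ) d).im ^ 2 -
      4 * (a * (starRingEnd ℂ) c).re * (b * (starRingEnd ℂ) d).re ≤ 0 := by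
  obtain ⟨a1, a2, rfl⟩ := ha
  obtain ⟨b1, b2, rfl⟩ := hb
  obtain ⟨c1, c2, rfl⟩ := hc
  obtain ⟨d1, d2, rfl⟩ := hd
  set s : ℝ := Real.sqrt n with hs
  have hs2 : s ^ 2 = n := Real.sq_sqrt (by positivity)
  have hspos : 0 < s := Real.sqrt_pos.2 (by exact_mod_cast hn)
  rw [Complex.ext_iff] at h
  simp [Complex.add_re, Complex.add_im, Complex.mul_re, Complex.mul_im] at h ⊢
  obtain ⟨h1, h2⟩ := h
  have hRr : (a1 : ℝ) * d1 - n * (a2 * d2) - b1 * c1 + n * (b2 * c2) = 1 := by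
    linear_combination h1 + (a2 * d2 - b2 * c2) * hs2
  have hIr : ((a1 : ℝ) * d2 + a2 * d1 - b1 * c2 - b2 * c1) * s = 0 := by
    linear_combination h2
  have hIr' : (a1 : ℝ) * d2 + a2 * d1 - b1 * c2 - b2 * c1 = 0 :=
    (mul_eq_zero.1 hIr).resolve_right hspos.ne'
  have hRz : a1 * d1 - (n : ℤ) * (a2 * d2) - b1 * c1 + n * (b2 * c2) = 1 := by
    exact_mod_cast hRr
  have hIz : a1 * d2 + a2 * d1 - b1 * c2 - b2 * c1 = 0 := by exact_mod_cast hIr'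
  set X : ℤ := b1 * c1 + n * (a2 * d2) with hX
  have key : (n : ℤ) * (b2 * c1 - b1 * c2 - a2 * d1 + a1 * d2) ^ 2 -
      4 * (a1 * c1 + n * (a2 * c2)) * (b1 * d1 + n * (b2 * d2)) = -(4 * X * (X + 1)) := by
    linear_combination ((n : ℤ) * (a1 * d2 + a2 * d1 - b1 * c2 - b2 * c1)) * hIz
      + (-(4 * X)) * hRz
  have hXpos : (0 : ℤ) ≤ X * (X + 1) := by
    rcases le_or_gt 0 X with hx | hx
    · exact mul_nonneg hx (by linarith)
    · nlinarith
  have keyR : (n : ℝ) * ((b2 : ℝ) * c1 - b1 * c2 - a2 * d1 + a1 * d2) ^ 2 -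
      4 * ((a1 : ℝ) * c1 + n * (a2 * c2)) * ((b1 : ℝ) * d1 + n * (b2 * d2)) =
      -(4 * (X : ℝ) * ((X : ℝ) + 1)) := by exact_mod_cast key
  have hXR : (0 : ℝ) ≤ (X : ℝ) * ((X : ℝ) + 1) := by exact_mod_cast hXpos
  have e1 : (-((b1 : ℝ) * (c2 * s)) + b2 * s * c1 - (-(a1 * (d2 * s)) + a2 * s * d1)) ^ 2 =
      (n : ℝ) * ((b2 : ℝ) * c1 - b1 * c2 - a2 * d1 + a1 * d2) ^ 2 := by
    rw [← hs2]; ring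
  have e2 : 4 * ((a1 : ℝ) * c1 + a2 * s * (c2 * s)) * ((b1 : ℝ) * d1 + b2 * s * (d2 * s)) =
      4 * ((a1 : ℝ) * c1 + n * (a2 * c2)) * ((b1 : ℝ) * d1 + n * (b2 * d2)) := by
    rw [← hs2]; ring
  rw [e1, e2]
  linarith [keyR, hXR]
end

section
/- Let a,b,c,d be complex numbers with ad - bc = 1, and write z₁ = Re z component in a real/imaginary-part decomposition over ℤ[√(-n)], so a,b,c,d ∈ ℤ[√(-n)] with z = z₁ + z₂·i√n. Then (Im(b·conj(c)-a·conj(d)))² - 4·Re(a·conj(c))·Re(b·conj(d)) = -4X(1+X) where X = b₁c₁ + n·a₂d₂. -/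
open Complex

theorem stmt12 (n : ℕ) (hn : 0 < n)
    (a₁ a₂ b₁ b₂ c₁ c₂ d₁ d₂ : ℤ) (a b c d : ℂ)
    (ha : a = (a₁ : ℂ) + (a₂ : ℂ) * Real.sqrt n * Complex.I)
    (hb : b = (b₁ : ℂ) + (b₂ : ℂ) * Real.sqrt n * Complex.I)
    (hc : c = (c₁ : ℂ) + (c₂ : ℂ) * Real.sqrt n * Complex.I)
    (hd : d = (d₁ : ℂ) + (d₂ : ℂ) * Real.sqrt n * Complex.I)
    (h : a * d - b * c = 1) :
    (b * (starRingEnd ℂ) c - a * (starRingEnd ℂ) d).im ^ 2 -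
        4 * (a * (starRingEnd ℂ) c).re * (b * (starRingEnd ℂ) d).re =
      -4 * ((b₁ * c₁ + (n : ℝ) * a₂ * d₂) * (1 + (b₁ * c₁ + (n : ℝ) * a₂ * d₂))) := by
  subst ha hb hc hd
  set s : ℝ := Real.sqrt n with hs_def
  have hs : s * s = n := Real.mul_self_sqrt (Nat.cast_nonneg n)
  have hspos : 0 < s := Real.sqrt_pos.mpr (by exact_mod_cast hn)
  have h1 := congrArg Complex.re h
  have h2 := congrArg Complex.im h
  simp [Complex.ext_iff, Complex.add_re, Complex.add_im, Complex.mul_re, Complex.mul_im] at h1 h2 ⊢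
  have hE : (a₁ : ℝ) * d₂ + a₂ * d₁ - b₁ * c₂ - b₂ * c₁ = 0 := by
    have hm : s * ((a₁ : ℝ) * d₂ + a₂ * d₁ - b₁ * c₂ - b₂ * c₁) = 0 := by linarith [h2]
    rcases mul_eq_zero.mp hm with h' | h'
    · exact absurd h' (ne_of_gt hspos)
    · exact h'
  have h1' : (a₁:ℝ)*d₁ - n*(a₂*d₂) - b₁*c₁ + n*(b₂*c₂) = 1 := by
    linear_combination h1 + ((a₂:ℝ)*d₂ - b₂*c₂) * hs
  linear_combination
    (((a₁:ℝ)*d₂ - a₂*d₁ - b₁*c₂ + b₂*c₁)^2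
      - 4*(b₂:ℝ)*d₂*((a₁:ℝ)*c₁ + n*a₂*c₂)
      - 4*(a₂:ℝ)*c₂*((b₁:ℝ)*d₁ + n*b₂*d₂)
      - 4*(a₂:ℝ)*c₂*b₂*d₂*(s*s - n)) * hs
    + (-4 * ((b₁:ℝ)*c₁ + n*a₂*d₂)) * h1'
    + ((n:ℝ) * ((a₁:ℝ)*d₂ + a₂*d₁ - b₁*c₂ - b₂*c₁)) * hE
end

section
/- Let n be a positive integer and a,b,c,d ∈ ℤ[√(-n)] with ad - bc = 1, and suppose Re(a·conj(c)) ≠ 0 and Re(a·conj(b)) ≠ 0. Then Re(a·conj(c)) · Re(a·conj(b)) · Re(a·conj(d) + b·conj(c)) ≥ 0. -/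
open Complex


lemma key14 (n a1 a2 b1 b2 c1 c2 d1 d2 : ℤ) (hn : 0 ≤ n)
    (e1 : a1*d1 - n*(a2*d2) - b1*c1 + n*(b2*c2) = 1)
    (e2 : a1*d2 + a2*d1 = b1*c2 + b2*c1) :
    0 ≤ (a1*c1 + n*(a2*c2)) * (a1*b1 + n*(a2*b2)) *
      (a1*d1 + n*(a2*d2) + (b1*c1 + n*(b2*c2))) := by
  set X := b1*c1 + n*(a2*d2) with hX
  have hid : (a1*c1 + n*(a2*c2)) * (a1*b1 + n*(a2*b2)) *
      (a1*d1 + n*(a2*d2) + (b1*c1 + n*(b2*c2)))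
      = ((a1^2 + n*a2^2)*X + n*a2^2)*(2*X+1) := by
    linear_combination ((a1*c1 + n*(a2*c2)) * (a1*b1 + n*(a2*b2)) + n*a2^2*(2*X+1)) * e1
      - (2*X+1)*n*a1*a2 * e2
  rw [hid]
  rcases le_or_gt 0 X with hx | hx
  · have h1 : 0 ≤ (a1^2 + n*a2^2)*X + n*a2^2 := by positivity
    nlinarith
  · have hx1 : X ≤ -1 := by omega
    have hA : (a1^2 + n*a2^2)*X + n*a2^2 ≤ 0 := by
      nlinarith [mul_nonpos_of_nonneg_of_nonpos (sq_nonneg a1) hx.le,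
        mul_nonpos_of_nonneg_of_nonpos (mul_nonneg hn (sq_nonneg a2)) (by linarith : X + 1 ≤ 0)]
    have h2x : 2*X+1 ≤ 0 := by omega
    nlinarith [mul_nonneg (neg_nonneg.2 hA) (neg_nonneg.2 h2x)]


theorem stmt14 (n : ℕ) (hn : 0 < n) (a b c d : ℂ)
    (ha : ∃ x y : ℤ, a = (x : ℂ) + (y : ℂ) * Real.sqrt n * Complex.I)
    (hb : ∃ x y : ℤ, b = (x : ℂ) + (y : ℂ) * Real.sqrt n * Complex.I)
    (hc : ∃ x y : ℤ, c = (x : ℂ) + (y : ℂ) * Real.sqrt n * Complex.I)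
    (hd : ∃ x y : ℤ, d = (x : ℂ) + (y : ℂ) * Real.sqrt n * Complex.I)
    (h : a * d - b * c = 1)
    (h1 : (a * (starRingEnd ℂ) c).re ≠ 0)
    (h2 : (a * (starRingEnd ℂ) b).re ≠ 0) :
    0 ≤ (a * (starRingEnd ℂ) c).re * (a * (starRingEnd ℂ) b).re *
        (a * (starRingEnd ℂ) d + b * (starRingEnd ℂ) c).re := by
  obtain ⟨a1, a2, rfl⟩ := ha
  obtain ⟨b1, b2, rfl⟩ := hb
  obtain ⟨c1, c2, rfl⟩ := hc
  obtain ⟨d1, d2, rfl⟩ := hd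
  have hs : Real.sqrt n * Real.sqrt n = (n:ℝ) := Real.mul_self_sqrt (Nat.cast_nonneg n)
  have hspos : 0 < Real.sqrt n := Real.sqrt_pos.2 (by exact_mod_cast hn)
  have hre := congrArg Complex.re h
  have him := congrArg Complex.im h
  simp [Complex.mul_re, Complex.mul_im] at hre him ⊢
  have e1 : a1*d1 - (n:ℤ)*(a2*d2) - b1*c1 + (n:ℤ)*(b2*c2) = 1 := by
    have h' : ((a1*d1 - (n:ℤ)*(a2*d2) - b1*c1 + (n:ℤ)*(b2*c2) : ℤ) : ℝ) = 1 := by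
      push_cast
      linear_combination hre + ((a2:ℝ)*d2 - (b2:ℝ)*c2) * hs
    exact_mod_cast h'
  have e2 : a1*d2 + a2*d1 = b1*c2 + b2*c1 := by
    have h' : ((a1*d2 + a2*d1 : ℤ) : ℝ) * Real.sqrt n = ((b1*c2 + b2*c1 : ℤ) : ℝ) * Real.sqrt n := by
      push_cast
      linear_combination him
    exact_mod_cast mul_right_cancel₀ (ne_of_gt hspos) h'
  have key := key14 (n:ℤ) a1 a2 b1 b2 c1 c2 d1 d2 (by positivity) e1 e2
  have g1 : (a1:ℝ)*c1 + (a2:ℝ)*Real.sqrt n*((c2:ℝ)*Real.sqrt n)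
      = ((a1*c1 + (n:ℤ)*(a2*c2) : ℤ) : ℝ) := by
    push_cast; linear_combination ((a2:ℝ)*(c2:ℝ))*hs
  have g2 : (a1:ℝ)*b1 + (a2:ℝ)*Real.sqrt n*((b2:ℝ)*Real.sqrt n)
      = ((a1*b1 + (n:ℤ)*(a2*b2) : ℤ) : ℝ) := by
    push_cast; linear_combination ((a2:ℝ)*(b2:ℝ))*hs
  have g3 : (a1:ℝ)*d1 + (a2:ℝ)*Real.sqrt n*((d2:ℝ)*Real.sqrt n)
      + ((b1:ℝ)*c1 + (b2:ℝ)*Real.sqrt n*((c2:ℝ)*Real.sqrt n))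
      = ((a1*d1 + (n:ℤ)*(a2*d2) + (b1*c1 + (n:ℤ)*(b2*c2)) : ℤ) : ℝ) := by
    push_cast; linear_combination ((a2:ℝ)*(d2:ℝ) + (b2:ℝ)*(c2:ℝ))*hs
  rw [g1, g2, g3]
  exact_mod_cast key
end

section
/- Define m : SL_2(ℂ) → ℝ by m([[a,b],[c,d]]) = sign(Re(a·conj(c) + b·conj(d))), and let G₀ = { [[x, i·y],[i·z, w]] : x,y,z,w ∈ ℝ, x·w + y·z = 1 } ⊆ SL_2(ℂ). Then m is left G₀-invariant: m(g·h) = m(h) for all g ∈ G₀ and h ∈ SL_2(ℂ). -/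
open Complex Matrix

noncomputable def m (g : Matrix (Fin 2) (Fin 2) ℂ) : ℝ :=
  Real.sign ((g 0 0 * (starRingEnd ℂ) (g 1 0) + g 0 1 * (starRingEnd ℂ) (g 1 1)).re)

theorem stmt17 (g h : Matrix (Fin 2) (Fin 2) ℂ)
    (hg : ∃ x y z w : ℝ, g = !![(x : ℂ), Complex.I * y; Complex.I * z, (w : ℂ)] ∧
      x * w + y * z = 1)
    (hh : h.det = 1) :
    m (g * h) = m h := by
  obtain ⟨x, y, z, w, rfl, hxw⟩ := hg
  unfold m
  congr 1
  set a := h 0 0; set b := h 0 1; set c := h 1 0; set d := h 1 1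
  have e00 : (!![(x : ℂ), Complex.I * y; Complex.I * z, (w : ℂ)] * h) 0 0
      = x * a + Complex.I * y * c := by
    simp [Matrix.mul_apply, Fin.sum_univ_two, a, c]
  have e01 : (!![(x : ℂ), Complex.I * y; Complex.I * z, (w : ℂ)] * h) 0 1
      = x * b + Complex.I * y * d := by
    simp [Matrix.mul_apply, Fin.sum_univ_two, b, d]
  have e10 : (!![(x : ℂ), Complex.I * y; Complex.I * z, (w : ℂ)] * h) 1 0
      = Complex.I * z * a + w * c := by
    simp [Matrix.mul_apply, Fin.sum_univ_two, a, c]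
  have e11 : (!![(x : ℂ), Complex.I * y; Complex.I * z, (w : ℂ)] * h) 1 1
      = Complex.I * z * b + w * d := by
    simp [Matrix.mul_apply, Fin.sum_univ_two, b, d]
  rw [e00, e01, e10, e11]
  simp only [map_add, _root_.map_mul, Complex.conj_I, Complex.conj_ofReal, Complex.add_re,
    Complex.mul_re, Complex.mul_im, Complex.add_im, Complex.I_re, Complex.I_im,
    Complex.ofReal_re, Complex.ofReal_im, Complex.neg_re, Complex.neg_im,
    Complex.conj_re, Complex.conj_im]
  ring_nf
  linear_combination (a.re * c.re + a.im * c.im + b.re * d.re + b.im * d.im) * hxw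
end

section
/- Let n ≥ 1 be an integer and let K = K⁺ ∪ K⁻ where K⁺ = { [[x, y√(-n)],[z√(-n), w]] : x,y,z,w ∈ ℤ, xw + nyz = 1 } and K⁻ = { [[x√(-n), y],[z, w√(-n)]] : x,y,z,w ∈ ℤ, nxw + yz = 1 }. Then K is a subgroup of SL_2(ℤ[√(-n)]) and the map χ : K → {±1} with χ = 1 on K⁺ and χ = -1 on K⁻ is a group homomorphism (taking values in matrices modulo sign, i.e. working in PSL_2). -/
open Complex Matrix

noncomputable section

/-- `K⁺ = { [[x, y√(-n)],[z√(-n), w]] : x,y,z,w ∈ ℤ, xw + nyz = 1 }`, with `√(-n) = i√n`. -/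
def Kplus (n : ℕ) : Set (Matrix (Fin 2) (Fin 2) ℂ) :=
  {g | ∃ x y z w : ℤ,
    g = !![(x : ℂ), (y : ℂ) * (Real.sqrt n * Complex.I);
           (z : ℂ) * (Real.sqrt n * Complex.I), (w : ℂ)] ∧
    x * w + (n : ℤ) * y * z = 1}

/-- `K⁻ = { [[x√(-n), y],[z, w√(-n)]] : x,y,z,w ∈ ℤ, nxw + yz = 1 }`. -/
def Kminus (n : ℕ) : Set (Matrix (Fin 2) (Fin 2) ℂ) :=
  {g | ∃ x y z w : ℤ,
    g = !![(x : ℂ) * (Real.sqrt n * Complex.I), (y : ℂ);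
           (z : ℂ), (w : ℂ) * (Real.sqrt n * Complex.I)] ∧
    (n : ℤ) * x * w + y * z = 1}

open Classical in
/-- `χ` is `1` on `K⁺` and `-1` on `K⁻`. -/
def chi (n : ℕ) (g : Matrix (Fin 2) (Fin 2) ℂ) : ℤ :=
  if g ∈ Kplus n then 1 else -1

lemma key_sq (n : ℕ) : ((Real.sqrt n : ℂ) * Complex.I) * ((Real.sqrt n : ℂ) * Complex.I) = -(n : ℂ) := by
  have h : (Real.sqrt n) * (Real.sqrt n) = (n : ℝ) := Real.mul_self_sqrt (by positivity)
  have h2 : ((Real.sqrt n : ℂ)) * ((Real.sqrt n : ℂ)) = (n : ℂ) := by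
    rw [← Complex.ofReal_mul, h]; simp
  calc ((Real.sqrt n : ℂ) * Complex.I) * ((Real.sqrt n : ℂ) * Complex.I)
      = ((Real.sqrt n : ℂ) * (Real.sqrt n : ℂ)) * (Complex.I * Complex.I) := by ring
    _ = -(n : ℂ) := by rw [h2, Complex.I_mul_I]; ring

lemma det_plusform (n : ℕ) (x y z w : ℤ) :
    (!![(x : ℂ), (y : ℂ) * (Real.sqrt n * Complex.I);
        (z : ℂ) * (Real.sqrt n * Complex.I), (w : ℂ)]).det
      = ((x * w + (n : ℤ) * y * z : ℤ) : ℂ) := by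
  rw [Matrix.det_fin_two_of]
  push_cast
  linear_combination (-(y : ℂ) * z) * key_sq n

lemma det_minusform (n : ℕ) (x y z w : ℤ) :
    (!![(x : ℂ) * (Real.sqrt n * Complex.I), (y : ℂ);
        (z : ℂ), (w : ℂ) * (Real.sqrt n * Complex.I)]).det
      = -(((n : ℤ) * x * w + y * z : ℤ) : ℂ) := by
  rw [Matrix.det_fin_two_of]
  push_cast
  linear_combination ((x : ℂ) * w) * key_sq n

lemma mem_plus (n : ℕ) {g : Matrix (Fin 2) (Fin 2) ℂ} (x y z w : ℤ)
    (hg : g = !![(x : ℂ), (y : ℂ) * (Real.sqrt n * Complex.I);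
           (z : ℂ) * (Real.sqrt n * Complex.I), (w : ℂ)])
    (hdet : g.det = 1) : g ∈ Kplus n := by
  refine ⟨x, y, z, w, hg, ?_⟩
  rw [hg, det_plusform] at hdet
  exact_mod_cast hdet

lemma mem_minus (n : ℕ) {g : Matrix (Fin 2) (Fin 2) ℂ} (x y z w : ℤ)
    (hg : g = !![(x : ℂ) * (Real.sqrt n * Complex.I), (y : ℂ);
           (z : ℂ), (w : ℂ) * (Real.sqrt n * Complex.I)])
    (hdet : g.det = -1) : g ∈ Kminus n := by
  refine ⟨x, y, z, w, hg, ?_⟩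
  rw [hg, det_minusform] at hdet
  have h2 : (((n : ℤ) * x * w + y * z : ℤ) : ℂ) = ((1 : ℤ) : ℂ) := by
    push_cast at hdet ⊢
    linear_combination -hdet
  exact_mod_cast h2

lemma det_of_mem_plus {n : ℕ} {g : Matrix (Fin 2) (Fin 2) ℂ} (h : g ∈ Kplus n) :
    g.det = 1 := by
  obtain ⟨x, y, z, w, rfl, hd⟩ := h
  rw [det_plusform, hd]; norm_num

lemma det_of_mem_minus {n : ℕ} {g : Matrix (Fin 2) (Fin 2) ℂ} (h : g ∈ Kminus n) :
    g.det = -1 := by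
  obtain ⟨x, y, z, w, rfl, hd⟩ := h
  rw [det_minusform, hd]; norm_num

lemma neg_mem_plus {n : ℕ} {g : Matrix (Fin 2) (Fin 2) ℂ} (h : g ∈ Kplus n) :
    -g ∈ Kplus n := by
  have hd := det_of_mem_plus h
  obtain ⟨x, y, z, w, rfl, _⟩ := h
  refine mem_plus n (-x) (-y) (-z) (-w) ?_ ?_
  · ext i j; fin_cases i <;> fin_cases j <;> simp <;> push_cast <;> ring
  · rw [Matrix.det_neg, hd]; norm_num

lemma neg_mem_minus {n : ℕ} {g : Matrix (Fin 2) (Fin 2) ℂ} (h : g ∈ Kminus n) :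
    -g ∈ Kminus n := by
  have hd := det_of_mem_minus h
  obtain ⟨x, y, z, w, rfl, _⟩ := h
  refine mem_minus n (-x) (-y) (-z) (-w) ?_ ?_
  · ext i j; fin_cases i <;> fin_cases j <;> simp <;> push_cast <;> ring
  · rw [Matrix.det_neg, hd]; norm_num

lemma mul_pp {n : ℕ} {g h : Matrix (Fin 2) (Fin 2) ℂ} (hg : g ∈ Kplus n)
    (hh : h ∈ Kplus n) : g * h ∈ Kplus n := by
  have hdet : (g * h).det = 1 := by
    rw [Matrix.det_mul, det_of_mem_plus hg, det_of_mem_plus hh]; norm_num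
  obtain ⟨a, b, c, d, rfl, _⟩ := hg
  obtain ⟨e, f, p, q, rfl, _⟩ := hh
  refine mem_plus n (a * e - n * b * p) (a * f + b * q) (c * e + d * p)
    (d * q - n * c * f) ?_ hdet
  rw [Matrix.mul_fin_two]
  ext i j
  fin_cases i <;> fin_cases j <;> simp <;> push_cast <;>
    first
      | ring1
      | linear_combination ((b : ℂ) * p) * key_sq n
      | linear_combination ((c : ℂ) * f) * key_sq n

lemma mul_pm {n : ℕ} {g h : Matrix (Fin 2) (Fin 2) ℂ} (hg : g ∈ Kplus n)
    (hh : h ∈ Kminus n) : g * h ∈ Kminus n := by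
  have hdet : (g * h).det = -1 := by
    rw [Matrix.det_mul, det_of_mem_plus hg, det_of_mem_minus hh]; norm_num
  obtain ⟨a, b, c, d, rfl, _⟩ := hg
  obtain ⟨e, f, p, q, rfl, _⟩ := hh
  refine mem_minus n (a * e + b * p) (a * f - n * b * q) (d * p - n * c * e)
    (c * f + d * q) ?_ hdet
  rw [Matrix.mul_fin_two]
  ext i j
  fin_cases i <;> fin_cases j <;> simp <;> push_cast <;>
    first
      | ring1
      | linear_combination ((b : ℂ) * q) * key_sq n
      | linear_combination ((c : ℂ) * e) * key_sq n

lemma mul_mp {n : ℕ} {g h : Matrix (Fin 2) (Fin 2) ℂ} (hg : g ∈ Kminus n)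
    (hh : h ∈ Kplus n) : g * h ∈ Kminus n := by
  have hdet : (g * h).det = -1 := by
    rw [Matrix.det_mul, det_of_mem_minus hg, det_of_mem_plus hh]; norm_num
  obtain ⟨a, b, c, d, rfl, _⟩ := hg
  obtain ⟨e, f, p, q, rfl, _⟩ := hh
  refine mem_minus n (a * e + b * p) (b * q - n * a * f) (c * e - n * d * p)
    (c * f + d * q) ?_ hdet
  rw [Matrix.mul_fin_two]
  ext i j
  fin_cases i <;> fin_cases j <;> simp <;> push_cast <;>
    first
      | ring1
      | linear_combination ((a : ℂ) * f) * key_sq n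
      | linear_combination ((d : ℂ) * p) * key_sq n

lemma mul_mm {n : ℕ} {g h : Matrix (Fin 2) (Fin 2) ℂ} (hg : g ∈ Kminus n)
    (hh : h ∈ Kminus n) : g * h ∈ Kplus n := by
  have hdet : (g * h).det = 1 := by
    rw [Matrix.det_mul, det_of_mem_minus hg, det_of_mem_minus hh]; norm_num
  obtain ⟨a, b, c, d, rfl, _⟩ := hg
  obtain ⟨e, f, p, q, rfl, _⟩ := hh
  refine mem_plus n (b * p - n * a * e) (a * f + b * q) (c * e + d * p)
    (c * f - n * d * q) ?_ hdet
  rw [Matrix.mul_fin_two]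
  ext i j
  fin_cases i <;> fin_cases j <;> simp <;> push_cast <;>
    first
      | ring1
      | linear_combination ((a : ℂ) * e) * key_sq n
      | linear_combination ((d : ℂ) * q) * key_sq n

lemma disjointKpm (n : ℕ) (hn : 1 ≤ n) : Kplus n ∩ Kminus n = ∅ := by
  ext g
  simp only [Set.mem_inter_iff, Set.mem_empty_iff_false, iff_false]
  rintro ⟨hp, hm⟩
  have h1 := det_of_mem_plus hp
  have h2 := det_of_mem_minus hm
  rw [h1] at h2
  norm_num at h2

lemma inv_plus {n : ℕ} {g : Matrix (Fin 2) (Fin 2) ℂ} (hg : g ∈ Kplus n) :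
    ∃ h ∈ Kplus n, g * h = 1 := by
  have hd := det_of_mem_plus hg
  obtain ⟨x, y, z, w, rfl, hdi⟩ := hg
  refine ⟨!![(w : ℂ), ((-y : ℤ) : ℂ) * (Real.sqrt n * Complex.I);
            ((-z : ℤ) : ℂ) * (Real.sqrt n * Complex.I), (x : ℂ)], ?_, ?_⟩
  · refine mem_plus n w (-y) (-z) x rfl ?_
    rw [det_plusform]
    have : (w * x + (n : ℤ) * -y * -z : ℤ) = 1 := by linarith [hdi]
    rw [this]; norm_num
  · have hdc : ((x * w + (n : ℤ) * y * z : ℤ) : ℂ) = 1 := by rw [hdi]; norm_num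
    push_cast at hdc
    rw [Matrix.mul_fin_two]
    ext i j
    fin_cases i <;> fin_cases j <;> simp <;> push_cast <;>
      first
        | ring1
        | linear_combination hdc - (y : ℂ) * z * key_sq n
        | linear_combination hdc - (z : ℂ) * y * key_sq n

lemma inv_minus {n : ℕ} {g : Matrix (Fin 2) (Fin 2) ℂ} (hg : g ∈ Kminus n) :
    ∃ h ∈ Kminus n, g * h = -1 := by
  have hd := det_of_mem_minus hg
  obtain ⟨x, y, z, w, rfl, hdi⟩ := hg
  refine ⟨!![(w : ℂ) * (Real.sqrt n * Complex.I), ((-y : ℤ) : ℂ);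
            ((-z : ℤ) : ℂ), (x : ℂ) * (Real.sqrt n * Complex.I)], ?_, ?_⟩
  · refine mem_minus n w (-y) (-z) x rfl ?_
    rw [det_minusform]
    have : ((n : ℤ) * w * x + -y * -z : ℤ) = 1 := by linarith [hdi]
    rw [this]; norm_num
  · have hdc : (((n : ℤ) * x * w + y * z : ℤ) : ℂ) = 1 := by rw [hdi]; norm_num
    push_cast at hdc
    rw [Matrix.mul_fin_two]
    ext i j
    fin_cases i <;> fin_cases j <;> simp <;> push_cast <;>
      first
        | ring1
        | linear_combination -hdc + (x : ℂ) * w * key_sq n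
        | linear_combination -hdc + (w : ℂ) * x * key_sq n

lemma chi_of_plus {n : ℕ} {g : Matrix (Fin 2) (Fin 2) ℂ} (h : g ∈ Kplus n) :
    chi n g = 1 := by
  rw [chi, if_pos h]

lemma chi_of_minus {n : ℕ} (hn : 1 ≤ n) {g : Matrix (Fin 2) (Fin 2) ℂ}
    (h : g ∈ Kminus n) : chi n g = -1 := by
  rw [chi, if_neg]
  intro hp
  have := disjointKpm n hn
  have : g ∈ Kplus n ∩ Kminus n := ⟨hp, h⟩
  rw [disjointKpm n hn] at this
  exact this

lemma mem_plus_of_pm {n : ℕ} {a k : Matrix (Fin 2) (Fin 2) ℂ} (ha : a ∈ Kplus n)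
    (h : a = k ∨ a = -k) : k ∈ Kplus n := by
  rcases h with h | h
  · rw [← h]; exact ha
  · have hk : k = -a := by rw [h]; simp
    rw [hk]; exact neg_mem_plus ha

lemma mem_minus_of_pm {n : ℕ} {a k : Matrix (Fin 2) (Fin 2) ℂ} (ha : a ∈ Kminus n)
    (h : a = k ∨ a = -k) : k ∈ Kminus n := by
  rcases h with h | h
  · rw [← h]; exact ha
  · have hk : k = -a := by rw [h]; simp
    rw [hk]; exact neg_mem_minus ha

/-- `K = K⁺ ∪ K⁻` is a subgroup (of matrices with entries in `ℤ[√(-n)]` and determinant one,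
identified modulo a global sign, i.e. working in `PSL₂`), and `χ` is a group homomorphism. -/
theorem stmt19 (n : ℕ) (hn : 1 ≤ n) :
    Kplus n ∩ Kminus n = ∅ ∧
    (1 : Matrix (Fin 2) (Fin 2) ℂ) ∈ Kplus n ∪ Kminus n ∧
    (∀ g h, g ∈ Kplus n ∪ Kminus n → h ∈ Kplus n ∪ Kminus n →
      g * h ∈ Kplus n ∪ Kminus n ∨ -(g * h) ∈ Kplus n ∪ Kminus n) ∧
    (∀ g ∈ Kplus n ∪ Kminus n, ∃ h ∈ Kplus n ∪ Kminus n,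
      g * h = 1 ∨ g * h = -1) ∧
    (∀ g h k, g ∈ Kplus n ∪ Kminus n → h ∈ Kplus n ∪ Kminus n →
      k ∈ Kplus n ∪ Kminus n → (g * h = k ∨ g * h = -k) →
      chi n k = chi n g * chi n h) := by
  refine ⟨disjointKpm n hn, ?_, ?_, ?_, ?_⟩
  · left
    refine mem_plus n 1 0 0 1 ?_ (by simp)
    rw [Matrix.one_fin_two]; norm_num
  · rintro g h (hg | hg) (hh | hh)
    · exact Or.inl (Or.inl (mul_pp hg hh))
    · exact Or.inl (Or.inr (mul_pm hg hh))
    · exact Or.inl (Or.inr (mul_mp hg hh))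
    · exact Or.inl (Or.inl (mul_mm hg hh))
  · rintro g (hg | hg)
    · obtain ⟨h, hh, he⟩ := inv_plus hg
      exact ⟨h, Or.inl hh, Or.inl he⟩
    · obtain ⟨h, hh, he⟩ := inv_minus hg
      exact ⟨h, Or.inr hh, Or.inr he⟩
  · rintro g h k hg hh _ hgh
    rcases hg with hg | hg <;> rcases hh with hh | hh
    · have hk' : k ∈ Kplus n := mem_plus_of_pm (mul_pp hg hh) hgh
      rw [chi_of_plus hk', chi_of_plus hg, chi_of_plus hh]; ring
    · have hk' : k ∈ Kminus n := mem_minus_of_pm (mul_pm hg hh) hgh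
      rw [chi_of_minus hn hk', chi_of_plus hg, chi_of_minus hn hh]; ring
    · have hk' : k ∈ Kminus n := mem_minus_of_pm (mul_mp hg hh) hgh
      rw [chi_of_minus hn hk', chi_of_minus hn hg, chi_of_plus hh]; ring
    · have hk' : k ∈ Kplus n := mem_plus_of_pm (mul_mm hg hh) hgh
      rw [chi_of_plus hk', chi_of_minus hn hg, chi_of_minus hn hh]; ring
end
end
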